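/- Let M be a type carrying the discrete topology and let f, g : (ℕ → Bool) → M be continuous. If f ≠ g then there exists w : ℕ → Bool such that f w ≠ g w and for every v with v < w in the lexicographic order, f v = g v. -/
import Mathlib

/-- Lexicographic (strict) order on the Cantor space `ℕ → Bool`. -/
def lexLt (w w' : ℕ → Bool) : Prop :=
  ∃ n : ℕ, (∀ k < n, w k = w' k) ∧ w n = false ∧ w' n = true

open Classical in
/-- Greedy lexicographically minimal element "of" `D`. -/
noncomputable def cantorMinW (D : Set (ℕ → Bool)) : ℕ → Bool
  | n => if ∃ x ∈ D, (∀ k, (h : k < n) → x k = cantorMinW D k) ∧ x n = false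
         then false else true
  termination_by n => n

open Classical in
lemma cantorMinW_def (D : Set (ℕ → Bool)) (n : ℕ) :
    cantorMinW D n =
      if ∃ x ∈ D, (∀ k, (h : k < n) → x k = cantorMinW D k) ∧ x n = false
      then false else true := by
  rw [cantorMinW]

lemma cantorMinW_key (D : Set (ℕ → Bool)) (hD : D.Nonempty) (n : ℕ) :
    ∃ x ∈ D, ∀ k < n, x k = cantorMinW D k := by
  induction n with
  | zero => obtain ⟨x, hx⟩ := hD; exact ⟨x, hx, by omega⟩
  | succ n ih =>
    obtain ⟨x, hxD, hx⟩ := ih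
    by_cases h : ∃ x ∈ D, (∀ k, (h : k < n) → x k = cantorMinW D k) ∧ x n = false
    · obtain ⟨y, hyD, hy1, hy2⟩ := h
      refine ⟨y, hyD, fun k hk => ?_⟩
      rcases Nat.lt_succ_iff_lt_or_eq.mp hk with hk | rfl
      · exact hy1 k hk
      · rw [hy2, cantorMinW_def, if_pos ⟨y, hyD, hy1, hy2⟩]
    · refine ⟨x, hxD, fun k hk => ?_⟩
      rcases Nat.lt_succ_iff_lt_or_eq.mp hk with hk | rfl
      · exact hx k hk
      · rw [cantorMinW_def, if_neg h]
        by_contra hxn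
        exact h ⟨x, hxD, fun k hk => hx k hk, by simpa using hxn⟩

/-- Two distinct continuous functions from the Cantor space to a discrete space have a
lexicographically least point of disagreement. -/
theorem exists_min_disagreement {M : Type*} [TopologicalSpace M] [DiscreteTopology M]
    (f g : (ℕ → Bool) → M) (hf : Continuous f) (hg : Continuous g) (hne : f ≠ g) :
    ∃ w : ℕ → Bool, f w ≠ g w ∧ ∀ v, lexLt v w → f v = g v := by
  set D : Set (ℕ → Bool) := {x | f x ≠ g x} with hDdef
  have hDne : D.Nonempty := by
    by_contra h
    exact hne (funext fun x => by_contra fun hx =>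
      h ⟨x, hx⟩)
  have hDclosed : IsClosed D := by
    have : IsOpen {x : ℕ → Bool | f x = g x} := by
      have : {x : ℕ → Bool | f x = g x} =
          (fun x => (f x, g x)) ⁻¹' {p : M × M | p.1 = p.2} := rfl
      rw [this]
      exact (hf.prodMk hg).isOpen_preimage _ (isOpen_discrete _)
    simpa [hDdef, ← Set.compl_setOf] using this.isClosed_compl
  set w := cantorMinW D with hw
  choose xs hxsD hxs using cantorMinW_key D hDne
  have htend : Filter.Tendsto xs Filter.atTop (nhds w) := by
    rw [tendsto_pi_nhds]
    intro k
    refine Filter.Tendsto.congr' ?_ tendsto_const_nhds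
    filter_upwards [Filter.eventually_ge_atTop (k + 1)] with n hn
    exact (hxs n k hn).symm
  have hwD : w ∈ D := hDclosed.mem_of_tendsto htend (Filter.Eventually.of_forall hxsD)
  refine ⟨w, hwD, fun v hv => ?_⟩
  obtain ⟨n, hvw, hvn, hwn⟩ := hv
  by_contra hvD
  have hex : ∃ x ∈ D, (∀ k, (h : k < n) → x k = cantorMinW D k) ∧ x n = false :=
    ⟨v, hvD, fun k hk => (hvw k hk).trans rfl, hvn⟩
  have heq := cantorMinW_def D n
  rw [if_pos hex] at heq
  rw [hw, heq] at hwn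
  exact Bool.false_ne_true hwn
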